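/- Let G be a communication graph consisting of a single t-ring (t > 1). Then any colouring sequence on G completes if and only if the rule recv→•yel (buffered receive colouring, consuming a token) is invoked at least once in the sequence. -/

import Mathlib

/-! Formal framework: communication graphs and the red/yellow/green colouring game
(Brodsky–Pedersen–Wagner, "On the Complexity of Buffer Allocation in Message Passing Systems"),
with receive-side token pools. -/

inductive Colour : Type
  | red | yellow | green
deriving DecidableEq

/-- A communication graph: vertices are partitioned into start/send/receive/end vertices,
`pred u v` means `u` is the component predecessor of `v` (a process arc `u → v`),
`matched u v` is a communication arc from send `u` to its matching receive `v`,
`comp v` is the index of the process component of `v`, and `pos v` is the position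
of `v` within its component chain. -/
structure CommGraph (V : Type) where
  isStart : V → Prop
  isSend : V → Prop
  isRecv : V → Prop
  isEnd : V → Prop
  pred : V → V → Prop
  matched : V → V → Prop
  comp : V → ℕ
  pos : V → ℕ

namespace CommGraph

variable {V : Type}

/-- An arc of the communication graph (process arc or communication arc). -/
def GArc (G : CommGraph V) (u v : V) : Prop := G.pred u v ∨ G.matched u v

/-- Well-formedness of a communication graph: the vertex kinds partition `V`,
components are chains (unique predecessors, positions increase along process arcs),
communication arcs go from sends to receives in different components and form a
partial matching, and the graph is acyclic (arcs admit no infinite descent). -/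
structure WF (G : CommGraph V) : Prop where
  kinds : ∀ v, G.isStart v ∨ G.isSend v ∨ G.isRecv v ∨ G.isEnd v
  start_not_send : ∀ v, G.isStart v → ¬ G.isSend v
  start_not_recv : ∀ v, G.isStart v → ¬ G.isRecv v
  start_not_end : ∀ v, G.isStart v → ¬ G.isEnd v
  send_not_recv : ∀ v, G.isSend v → ¬ G.isRecv v
  send_not_end : ∀ v, G.isSend v → ¬ G.isEnd v
  recv_not_end : ∀ v, G.isRecv v → ¬ G.isEnd v
  pred_unique : ∀ {u u' v}, G.pred u v → G.pred u' v → u = u'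
  pred_comp : ∀ {u v}, G.pred u v → G.comp u = G.comp v
  pred_pos : ∀ {u v}, G.pred u v → G.pos v = G.pos u + 1
  start_no_pred : ∀ {u v}, G.pred u v → ¬ G.isStart v
  has_pred : ∀ v, ¬ G.isStart v → ∃ u, G.pred u v
  matched_send : ∀ {u v}, G.matched u v → G.isSend u
  matched_recv : ∀ {u v}, G.matched u v → G.isRecv v
  matched_comp : ∀ {u v}, G.matched u v → G.comp u ≠ G.comp v
  matched_unique_left : ∀ {u u' v}, G.matched u v → G.matched u' v → u = u'
  matched_unique_right : ∀ {u v v'}, G.matched u v → G.matched u v' → v = v'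
  send_has_match : ∀ v, G.isSend v → ∃ w, G.matched v w
  recv_has_match : ∀ v, G.isRecv v → ∃ w, G.matched w v
  dag : WellFounded fun u v => G.GArc u v

end CommGraph

/-- A state of the colouring game: the colouring, which receive vertices currently
hold a token on their incident communication arc, and the number of available
tokens in each (per-process, receive-side) pool. -/
structure St (V : Type) where
  col : V → Colour
  tok : V → Bool
  pool : ℕ → ℕ

/-- The names of the colouring rules. -/
inductive Rule : Type
  | sendYel | recvYel | recvYelTok | sendGrn | recvGrn | endYel | endGrn
deriving DecidableEq

variable {V : Type}

/-- One move of the colouring game (receive-side buffering: the token used by the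
buffered-receive rule `recvYelTok` comes from the pool of the receiving component,
and is returned when the receive turns green). -/
inductive Step [DecidableEq V] (G : CommGraph V) : Rule → St V → St V → Prop
  | sendYel {s : St V} {v u : V} :
      G.isSend v → s.col v = .red → G.pred u v → s.col u = .green →
      Step G .sendYel s ⟨Function.update s.col v .yellow, s.tok, s.pool⟩
  | recvYel {s : St V} {v u w : V} :
      G.isRecv v → s.col v = .red → G.matched w v → s.col w = .yellow →
      G.pred u v → s.col u = .green →
      Step G .recvYel s ⟨Function.update s.col v .yellow, s.tok, s.pool⟩
  | recvYelTok {s : St V} {v w : V} :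
      G.isRecv v → s.col v = .red → G.matched w v → s.col w = .yellow →
      0 < s.pool (G.comp v) →
      Step G .recvYelTok s ⟨Function.update s.col v .yellow,
        Function.update s.tok v true,
        Function.update s.pool (G.comp v) (s.pool (G.comp v) - 1)⟩
  | sendGrn {s : St V} {v r : V} :
      G.isSend v → s.col v = .yellow → G.matched v r → s.col r = .yellow →
      Step G .sendGrn s ⟨Function.update s.col v .green, s.tok, s.pool⟩
  | recvGrn {s : St V} {v u w : V} :
      G.isRecv v → s.col v = .yellow → G.pred u v → s.col u = .green →
      G.matched w v → s.col w = .green →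
      Step G .recvGrn s ⟨Function.update s.col v .green,
        Function.update s.tok v false,
        if s.tok v then
          Function.update s.pool (G.comp v) (s.pool (G.comp v) + 1)
        else s.pool⟩
  | endYel {s : St V} {v u : V} :
      G.isEnd v → s.col v = .red → G.pred u v → s.col u = .green →
      Step G .endYel s ⟨Function.update s.col v .yellow, s.tok, s.pool⟩
  | endGrn {s : St V} {v : V} :
      G.isEnd v → s.col v = .yellow →
      Step G .endGrn s ⟨Function.update s.col v .green, s.tok, s.pool⟩

/-- `IsSeq G s l` : the list `l` of (rule, state) pairs is a valid colouring sequence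
starting from state `s`. -/
def IsSeq [DecidableEq V] (G : CommGraph V) : St V → List (Rule × St V) → Prop
  | _, [] => True
  | s, p :: l => Step G p.1 s p.2 ∧ IsSeq G p.2 l

/-- The list of states visited by a colouring sequence. -/
def states (s0 : St V) (l : List (Rule × St V)) : List (St V) :=
  s0 :: l.map Prod.snd

/-- The final state of a colouring sequence. -/
def finalSt (s0 : St V) (l : List (Rule × St V)) : St V :=
  (states s0 l).getLast (by simp [states])

open Classical in
/-- The initial state: start vertices green, all others red, no tokens placed,
token pools given by the token assignment `B` (pool of component `i` holds `B i`). -/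
noncomputable def init (G : CommGraph V) (B : ℕ → ℕ) : St V :=
  ⟨fun v => if G.isStart v then Colour.green else Colour.red, fun _ => false, B⟩

/-- A state from which no colouring rule applies. -/
def MaximalFrom [DecidableEq V] (G : CommGraph V) (s : St V) : Prop :=
  ∀ ρ t, ¬ Step G ρ s t

/-- A state is complete when every vertex is green. -/
def Completes (s : St V) : Prop := ∀ v, s.col v = Colour.green

/-- A deadlocking colouring sequence from `s0`: a maximal sequence whose final
colouring has a non-green vertex. -/
def Deadlocks [DecidableEq V] (G : CommGraph V) (s0 : St V) (l : List (Rule × St V)) : Prop :=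
  IsSeq G s0 l ∧ MaximalFrom G (finalSt s0 l) ∧ ¬ Completes (finalSt s0 l)

/-- The system is safe (deadlock free) under token assignment `B`:
every maximal colouring sequence completes. -/
def DeadlockFree [DecidableEq V] (G : CommGraph V) (B : ℕ → ℕ) : Prop :=
  ∀ l, IsSeq G (init G B) l → MaximalFrom G (finalSt (init G B) l) →
    Completes (finalSt (init G B) l)

/-- A state blocks: some yellow send has a matching red receive to which the
buffered-receive rule cannot be applied (no token available). -/
def Blocked (G : CommGraph V) (s : St V) : Prop :=
  ∃ v r, G.matched v r ∧ s.col v = Colour.yellow ∧ s.col r = Colour.red ∧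
    s.pool (G.comp r) = 0

/-- The graph is block free under token assignment `B`: no colouring sequence blocks. -/
def BlockFree [DecidableEq V] (G : CommGraph V) (B : ℕ → ℕ) : Prop :=
  ∀ l, IsSeq G (init G B) l → ¬ Blocked G (finalSt (init G B) l)


/-- A `t`-ring communication graph: `t` process components, each the chain
start → send `s_j` → receive `r_j` → end, where the send of component `(j+1) mod t`
is matched to the receive of component `j`. -/
def ringGraph (t : ℕ) : CommGraph (Fin t × Fin 4) where
  isStart v := (v.2 : ℕ) = 0
  isSend v := (v.2 : ℕ) = 1
  isRecv v := (v.2 : ℕ) = 2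
  isEnd v := (v.2 : ℕ) = 3
  pred u v := u.1 = v.1 ∧ (v.2 : ℕ) = (u.2 : ℕ) + 1
  matched u v := (u.2 : ℕ) = 1 ∧ (v.2 : ℕ) = 2 ∧ (u.1 : ℕ) = ((v.1 : ℕ) + 1) % t
  comp v := v.1
  pos v := v.2


/-! Colours only advance, red → yellow → green. Without tokens, "every receive is red and no
send is green" is preserved by all rules but `recv→•yel`: a receive needs its own send green
to turn yellow, and a send needs its matching receive yellow to turn green. So a sequence
without buffered receives never completes.

Conversely, at a maximal state every send is non-red. If the send of component `j + 1` is
yellow, maximality forces the receive of `j` to be red and then the send of `j` to be yellow;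
going backwards round the ring, all receives are red. Otherwise all sends are green, and
maximality forces all receives and then all ends to be green. A buffered receive leaves a
non-red receive behind, which rules out the first case.

Both steps use two facts that hold in every reachable state of a well-formed graph, since a
send turns green only next to a yellow receive and a receive only next to a green send: a
green receive has a green send, and a green send has a non-red receive. -/

theorem finalSt_cons (s : St V) (p : Rule × St V) (l : List (Rule × St V)) :
    finalSt s (p :: l) = finalSt p.2 l := by
  simp [finalSt, states, List.getLast_cons]

section ColouringSequences

variable [DecidableEq V] {G : CommGraph V} {ρ : Rule} {s s' : St V}

theorem Step.col_eq_green (h : Step G ρ s s') {u : V} (hu : s.col u = .green) :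
    s'.col u = .green := by
  cases h <;> simp only [Function.update_apply] <;> split_ifs <;> simp_all

theorem Step.col_ne_red (h : Step G ρ s s') {u : V} (hu : s.col u ≠ .red) :
    s'.col u ≠ .red := by
  cases h <;> simp only [Function.update_apply] <;> split_ifs <;> simp_all

theorem Step.cases_of_turns_green (h : Step G ρ s s') {u : V} (hu : s.col u ≠ .green)
    (hu' : s'.col u = .green) :
    (∃ r, G.matched u r ∧ s.col r = .yellow) ∨ (∃ w, G.matched w u ∧ s.col w = .green) ∨
      G.isEnd u := by
  cases h <;> simp only [Function.update_apply] at hu' <;> split_ifs at hu' with hv <;>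
    first | exact absurd hu' hu | (subst hv; aesop)

theorem Step.exists_recv_yellow_of_recvYelTok (h : Step G .recvYelTok s s') :
    ∃ v, G.isRecv v ∧ s'.col v = .yellow := by
  cases h with
  | recvYelTok hv _ _ _ _ => exact ⟨_, hv, Function.update_self ..⟩

theorem IsSeq.invariant {P : St V → Prop} {l : List (Rule × St V)} (h : IsSeq G s l)
    (hs : P s) (hP : ∀ p ∈ l, ∀ s, Step G p.1 s p.2 → P s → P p.2) : P (finalSt s l) := by
  induction l generalizing s with
  | nil => exact hs
  | cons p l ih =>
    rw [finalSt_cons]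
    exact ih h.2 (hP p List.mem_cons_self s h.1 hs)
      fun q hq => hP q (List.mem_cons_of_mem p hq)

theorem IsSeq.col_finalSt_eq_green_of_isStart {B : ℕ → ℕ} {l : List (Rule × St V)}
    (h : IsSeq G (init G B) l) {v : V} (hv : G.isStart v) :
    (finalSt (init G B) l).col v = .green :=
  h.invariant (by simp [init, hv]) fun _ _ _ hstep => hstep.col_eq_green

theorem IsSeq.exists_step_of_mem {l : List (Rule × St V)} (h : IsSeq G s l) {p : Rule × St V}
    (hp : p ∈ l) :
    ∃ s₀ l', Step G p.1 s₀ p.2 ∧ IsSeq G p.2 l' ∧ finalSt p.2 l' = finalSt s l := by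
  induction l generalizing s with
  | nil => cases hp
  | cons q l ih =>
    rw [finalSt_cons]
    rcases List.mem_cons.1 hp with rfl | hp
    · exact ⟨s, l, h.1, h.2, rfl⟩
    · exact ih h.2 hp

theorem IsSeq.exists_recv_ne_red_of_mem {l : List (Rule × St V)} (h : IsSeq G s l)
    {p : Rule × St V} (hp : p ∈ l) (hρ : p.1 = .recvYelTok) :
    ∃ v, G.isRecv v ∧ (finalSt s l).col v ≠ .red := by
  obtain ⟨s₀, l', hstep, hseq, hfinal⟩ := h.exists_step_of_mem hp
  obtain ⟨v, hv, hyellow⟩ := (hρ ▸ hstep).exists_recv_yellow_of_recvYelTok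
  refine ⟨v, hv, hfinal ▸ hseq.invariant (P := fun s => s.col v ≠ .red) ?_ ?_⟩
  · simp [hyellow]
  · exact fun _ _ _ hstep => hstep.col_ne_red

end ColouringSequences

namespace CommGraph

variable {G : CommGraph V}

structure MatchCoherent (G : CommGraph V) (s : St V) : Prop where
  send_green : ∀ {w v}, G.matched w v → s.col v = .green → s.col w = .green
  recv_ne_red : ∀ {w v}, G.matched w v → s.col w = .green → s.col v ≠ .red

theorem WF.matchCoherent_init (hG : G.WF) (B : ℕ → ℕ) : G.MatchCoherent (init G B) where
  send_green {_ v} hm hv := by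
    have : ¬ G.isStart v := fun h => hG.start_not_recv v h (hG.matched_recv hm)
    simp [init, this] at hv
  recv_ne_red {w _} hm hw := by
    have : ¬ G.isStart w := fun h => hG.start_not_send w h (hG.matched_send hm)
    simp [init, this] at hw

variable [DecidableEq V]

theorem WF.matchCoherent_step (hG : G.WF) {ρ : Rule} {s s' : St V} (h : Step G ρ s s')
    (hs : G.MatchCoherent s) : G.MatchCoherent s' where
  send_green {w v} hm hv := by
    by_cases hv₀ : s.col v = .green
    · exact h.col_eq_green (hs.send_green hm hv₀)
    rcases h.cases_of_turns_green hv₀ hv with ⟨r, hvr, -⟩ | ⟨w', hw'v, hw'⟩ | hend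
    · exact absurd (hG.matched_recv hm) (hG.send_not_recv _ (hG.matched_send hvr))
    · exact h.col_eq_green (hG.matched_unique_left hw'v hm ▸ hw')
    · exact absurd hend (hG.recv_not_end _ (hG.matched_recv hm))
  recv_ne_red {w v} hm hw := by
    by_cases hw₀ : s.col w = .green
    · exact h.col_ne_red (hs.recv_ne_red hm hw₀)
    rcases h.cases_of_turns_green hw₀ hw with ⟨r, hwr, hr⟩ | ⟨w', hw'w, -⟩ | hend
    · exact h.col_ne_red (hG.matched_unique_right hwr hm ▸ hr ▸ nofun)
    · exact absurd (hG.matched_recv hw'w) (hG.send_not_recv _ (hG.matched_send hm))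
    · exact absurd hend (hG.send_not_end _ (hG.matched_send hm))

theorem WF.matchCoherent_finalSt (hG : G.WF) {B : ℕ → ℕ} {l : List (Rule × St V)}
    (h : IsSeq G (init G B) l) : G.MatchCoherent (finalSt (init G B) l) :=
  h.invariant (hG.matchCoherent_init B) fun _ _ _ hstep => hG.matchCoherent_step hstep

end CommGraph

open Fin.NatCast in
theorem Fin.forall_of_imp_add_one {n : ℕ} [NeZero n] {P : Fin n → Prop}
    (h : ∀ i, P (i + 1) → P i) {j : Fin n} (hj : P j) (i : Fin n) : P i := by
  have key : ∀ k : ℕ, P (j - (k : Fin n)) := by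
    intro k
    induction k with
    | zero => simpa using hj
    | succ k ih => exact h _ (by rwa [Nat.cast_succ, sub_add_eq_sub_sub, sub_add_cancel])
  simpa using key (j - i).val

namespace ringGraph

variable {t : ℕ}

theorem val_add_one [NeZero t] (i : Fin t) : ((i + 1 : Fin t) : ℕ) = (i + 1) % t := by
  rw [Fin.val_add, Fin.val_one', Nat.add_mod_mod]

theorem matched_iff [NeZero t] {u v : Fin t × Fin 4} :
    (ringGraph t).matched u v ↔ u = (v.1 + 1, 1) ∧ v.2 = 2 := by
  simp only [ringGraph, Prod.ext_iff, Fin.ext_iff, val_add_one]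
  exact ⟨fun ⟨h1, h2, h3⟩ => ⟨⟨h3, h1⟩, h2⟩, fun ⟨⟨h3, h1⟩, h2⟩ => ⟨h1, h2, h3⟩⟩

theorem wf (ht : 1 < t) : (ringGraph t).WF := by
  have : NeZero t := ⟨by omega⟩
  have one_ne_zero : (1 : Fin t) ≠ 0 := fun h => by
    simp [Fin.ext_iff, Nat.mod_eq_of_lt ht] at h
  refine
    { kinds := fun v => by simp only [ringGraph]; omega
      start_not_send := fun _ h h' => absurd (h.symm.trans h') (by decide)
      start_not_recv := fun _ h h' => absurd (h.symm.trans h') (by decide)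
      start_not_end := fun _ h h' => absurd (h.symm.trans h') (by decide)
      send_not_recv := fun _ h h' => absurd (h.symm.trans h') (by decide)
      send_not_end := fun _ h h' => absurd (h.symm.trans h') (by decide)
      recv_not_end := fun _ h h' => absurd (h.symm.trans h') (by decide)
      pred_unique := ?pred_unique
      pred_comp := fun h => congrArg Fin.val h.1
      pred_pos := fun h => h.2
      start_no_pred := fun h h' => absurd (h'.symm.trans h.2) (by omega)
      has_pred := ?has_pred
      matched_send := fun h => h.1
      matched_recv := fun h => h.2.1
      matched_comp := ?matched_comp
      matched_unique_left := fun h h' => (matched_iff.1 h).1.trans (matched_iff.1 h').1.symm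
      matched_unique_right := ?matched_unique_right
      send_has_match := fun v hv =>
        ⟨(v.1 - 1, 2), matched_iff.2 ⟨Prod.ext (sub_add_cancel _ _).symm (Fin.ext hv), rfl⟩⟩
      recv_has_match := fun v hv => ⟨(v.1 + 1, 1), matched_iff.2 ⟨rfl, Fin.ext hv⟩⟩
      dag := ?dag }
  case pred_unique =>
    rintro u u' v ⟨h₁, h₂⟩ ⟨h₁', h₂'⟩
    exact Prod.ext (h₁.trans h₁'.symm) (Fin.ext (by omega))
  case has_pred =>
    intro v hv
    simp only [ringGraph] at hv
    exact ⟨(v.1, ⟨v.2 - 1, by omega⟩), rfl, by simp only; omega⟩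
  case matched_comp =>
    intro u v h heq
    obtain ⟨rfl, -⟩ := matched_iff.1 h
    exact one_ne_zero (add_eq_left.1 (Fin.val_injective heq))
  case matched_unique_right =>
    intro u v v' h h'
    obtain ⟨rfl, hv⟩ := matched_iff.1 h
    obtain ⟨hu, hv'⟩ := matched_iff.1 h'
    exact Prod.ext (add_right_cancel (congrArg Prod.fst hu)) (hv.trans hv'.symm)
  case dag =>
    refine Subrelation.wf (fun {u v} h => ?_) (measure fun v : Fin t × Fin 4 => (v.2 : ℕ)).wf
    change (u.2 : ℕ) < v.2
    rcases h with ⟨-, h⟩ | ⟨h₁, h₂, -⟩ <;> omega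

abbrev send (i : Fin t) : Fin t × Fin 4 := (i, 1)

abbrev recv (i : Fin t) : Fin t × Fin 4 := (i, 2)

variable {s : St (Fin t × Fin 4)}

structure NoReceiveStarted (s : St (Fin t × Fin 4)) : Prop where
  recv_red : ∀ v, (ringGraph t).isRecv v → s.col v = .red
  send_ne_green : ∀ v, (ringGraph t).isSend v → s.col v ≠ .green

theorem noReceiveStarted_init (B : ℕ → ℕ) : NoReceiveStarted (init (ringGraph t) B) where
  recv_red v hv := by simp [init, ringGraph] at hv ⊢; omega
  send_ne_green v hv := by simp [init, ringGraph] at hv ⊢; omega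

theorem NoReceiveStarted.step {ρ : Rule} {s' : St (Fin t × Fin 4)} (hs : NoReceiveStarted s)
    (h : Step (ringGraph t) ρ s s') (hρ : ρ ≠ .recvYelTok) : NoReceiveStarted s' := by
  cases h with
  | @sendYel _ v _ hv _ _ _ =>
    refine ⟨fun w hw => ?_, fun w hw => ?_⟩ <;> dsimp only
    · rw [Function.update_of_ne (by rintro rfl; simp_all [ringGraph])]
      exact hs.recv_red w hw
    · rw [Function.update_apply]
      split_ifs
      exacts [nofun, hs.send_ne_green w hw]
  | recvYel _ _ _ _ hp hu =>
    exact absurd hu (hs.send_ne_green _ (by simp only [ringGraph] at *; omega))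
  | recvYelTok => exact absurd rfl hρ
  | sendGrn _ _ hm hr => exact absurd hr (by rw [hs.recv_red _ hm.2.1]; decide)
  | recvGrn hv hc => exact absurd hc (by rw [hs.recv_red _ hv]; decide)
  | endYel hv _ hp hu =>
    exact absurd hu (by rw [hs.recv_red _ (by simp only [ringGraph] at *; omega)]; decide)
  | @endGrn _ v hv _ =>
    refine ⟨fun w hw => ?_, fun w hw => ?_⟩ <;> dsimp only <;>
      rw [Function.update_of_ne (by rintro rfl; simp_all [ringGraph])]
    exacts [hs.recv_red w hw, hs.send_ne_green w hw]

theorem recv_red_of_forall_ne_recvYelTok {B : ℕ → ℕ} {l : List (Rule × St (Fin t × Fin 4))}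
    (h : IsSeq (ringGraph t) (init (ringGraph t) B) l) (hl : ∀ p ∈ l, p.1 ≠ .recvYelTok)
    {v : Fin t × Fin 4} (hv : (ringGraph t).isRecv v) :
    (finalSt (init (ringGraph t) B) l).col v = .red :=
  (h.invariant (noReceiveStarted_init B) fun p hp _ hstep hs =>
    hs.step hstep (hl p hp)).recv_red v hv

theorem send_ne_red_of_maximal (hstart : ∀ i, s.col (i, 0) = .green)
    (hmax : MaximalFrom (ringGraph t) s) (i : Fin t) : s.col (send i) ≠ .red := fun hred =>
  hmax _ _ (Step.sendYel (v := send i) (u := (i, 0)) rfl hred ⟨rfl, rfl⟩ (hstart i))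

variable [NeZero t]

theorem matched_send_add_one_recv (i : Fin t) :
    (ringGraph t).matched (send (i + 1)) (recv i) :=
  matched_iff.2 ⟨rfl, rfl⟩

theorem recv_red_and_send_yellow_of_maximal (hstart : ∀ i, s.col (i, 0) = .green)
    (hs : (ringGraph t).MatchCoherent s) (hmax : MaximalFrom (ringGraph t) s) {i : Fin t}
    (hy : s.col (send (i + 1)) = .yellow) :
    s.col (recv i) = .red ∧ s.col (send i) = .yellow := by
  have hm := matched_send_add_one_recv i
  have hr : s.col (recv i) = .red := by
    cases hc : s.col (recv i) with
    | red => rfl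
    | yellow => exact (hmax _ _ (Step.sendGrn (v := send (i + 1)) rfl hy hm hc)).elim
    | green => exact absurd (hs.send_green hm hc) (by rw [hy]; decide)
  refine ⟨hr, ?_⟩
  cases hc : s.col (send i) with
  | red => exact absurd hc (send_ne_red_of_maximal hstart hmax i)
  | yellow => rfl
  | green =>
    exact (hmax _ _ (Step.recvYel (v := recv i) (u := send i) rfl hr hm hy ⟨rfl, rfl⟩ hc)).elim

theorem recv_red_of_maximal_of_send_yellow (hstart : ∀ i, s.col (i, 0) = .green)
    (hs : (ringGraph t).MatchCoherent s) (hmax : MaximalFrom (ringGraph t) s) {j : Fin t}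
    (hj : s.col (send j) = .yellow) (i : Fin t) : s.col (recv i) = .red :=
  have hall := Fin.forall_of_imp_add_one (P := fun i => s.col (send i) = .yellow)
    (fun _ hi => (recv_red_and_send_yellow_of_maximal hstart hs hmax hi).2) hj
  (recv_red_and_send_yellow_of_maximal hstart hs hmax (hall (i + 1))).1

theorem completes_of_maximal (hstart : ∀ i, s.col (i, 0) = .green)
    (hs : (ringGraph t).MatchCoherent s) (hmax : MaximalFrom (ringGraph t) s)
    (hy : ∀ i, s.col (send i) ≠ .yellow) : Completes s := by
  have hsend (i : Fin t) : s.col (send i) = .green := by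
    cases hc : s.col (send i) with
    | red => exact absurd hc (send_ne_red_of_maximal hstart hmax i)
    | yellow => exact absurd hc (hy i)
    | green => rfl
  have hrecv (i : Fin t) : s.col (recv i) = .green := by
    have hm := matched_send_add_one_recv i
    cases hc : s.col (recv i) with
    | red => exact absurd hc (hs.recv_ne_red hm (hsend _))
    | yellow =>
      exact (hmax _ _ (Step.recvGrn (v := recv i) (u := send i) rfl hc ⟨rfl, rfl⟩ (hsend i) hm
        (hsend _))).elim
    | green => rfl
  have hend (i : Fin t) : s.col (i, 3) = .green := by
    cases hc : s.col (i, 3) with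
    | red =>
      exact (hmax _ _ (Step.endYel (v := (i, 3)) (u := recv i) rfl hc ⟨rfl, rfl⟩ (hrecv i))).elim
    | yellow => exact (hmax _ _ (Step.endGrn (v := (i, 3)) rfl hc)).elim
    | green => rfl
  rintro ⟨i, k⟩
  fin_cases k
  exacts [hstart i, hsend i, hrecv i, hend i]

theorem completes_iff_exists_recv_ne_red_of_maximal (hstart : ∀ i, s.col (i, 0) = .green)
    (hs : (ringGraph t).MatchCoherent s) (hmax : MaximalFrom (ringGraph t) s) :
    Completes s ↔ ∃ v, (ringGraph t).isRecv v ∧ s.col v ≠ .red := by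
  refine ⟨fun h => ⟨recv 0, rfl, by simp [h _]⟩, fun ⟨v, hv, hne⟩ => ?_⟩
  by_contra hincomplete
  obtain ⟨j, hj⟩ : ∃ j, s.col (send j) = .yellow := by
    by_contra! hy
    exact hincomplete (completes_of_maximal hstart hs hmax hy)
  have hv : v = recv v.1 := Prod.ext rfl (Fin.ext hv)
  exact hne (hv ▸ recv_red_of_maximal_of_send_yellow hstart hs hmax hj v.1)

end ringGraph

/-- **The t-Ring Lemma.** Let `G` be a communication graph comprising a single
`t`-ring (`t > 1`). Any (maximal) colouring sequence on `G` completes if and only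
if the buffered-receive rule `recv→•yel` is invoked at least once. -/
theorem t_ring_lemma (t : ℕ) (ht : 1 < t) (B : ℕ → ℕ)
    (l : List (Rule × St (Fin t × Fin 4)))
    (hseq : IsSeq (ringGraph t) (init (ringGraph t) B) l)
    (hmax : MaximalFrom (ringGraph t) (finalSt (init (ringGraph t) B) l)) :
    Completes (finalSt (init (ringGraph t) B) l) ↔
      ∃ p ∈ l, p.1 = Rule.recvYelTok := by
  have : NeZero t := ⟨by omega⟩
  rw [ringGraph.completes_iff_exists_recv_ne_red_of_maximal
    (fun _ => hseq.col_finalSt_eq_green_of_isStart rfl)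
    ((ringGraph.wf ht).matchCoherent_finalSt hseq) hmax]
  refine ⟨fun ⟨v, hv, hne⟩ => ?_, fun ⟨p, hp, hρ⟩ => hseq.exists_recv_ne_red_of_mem hp hρ⟩
  by_contra! hl
  exact hne (ringGraph.recv_red_of_forall_ne_recvYelTok hseq hl hv)
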